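/- arXiv:2202.05039 — 6 statements merged into one kernel-verified Lean document; each statement's English description precedes it below -/
import Mathlib

section
/- Let G=(V,E) be a connected finite weighted graph and u_0: V → ℝ a fixed function. If u and v both solve Δw = e^{w + u_0} − 1 + 4πN f on V (for a fixed function f and constant N), then u ≡ v on V. -/
open Finset Real Filter Topology

variable {V : Type*}

/-- Graph Laplacian: Δu(x) = (1/μ x) Σ_y w x y (u y - u x). -/
noncomputable def lap [Fintype V] (w : V → V → ℝ) (μ : V → ℝ) (u : V → ℝ) (x : V) : ℝ :=
  (1 / μ x) * ∑ y, w x y * (u y - u x)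

/-- Gradient form Γ(u,v)(x). -/
noncomputable def gam [Fintype V] (w : V → V → ℝ) (μ : V → ℝ) (u v : V → ℝ) (x : V) : ℝ :=
  (1 / (2 * μ x)) * ∑ y, w x y * (u y - u x) * (v y - v x)

/-- Integral over V: ∫_V f dμ = Σ_x μ x * f x. -/
noncomputable def intV [Fintype V] (μ : V → ℝ) (f : V → ℝ) : ℝ := ∑ x, μ x * f x

/-- Dirac mass at z. -/
noncomputable def dirac [DecidableEq V] (μ : V → ℝ) (z : V) (x : V) : ℝ :=
  if x = z then 1 / μ z else 0

theorem uniqueness_shifted_equation [Fintype V] [DecidableEq V]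
    (w : V → V → ℝ) (μ : V → ℝ)
    (hsym : ∀ x y, w x y = w y x) (hnn : ∀ x y, 0 ≤ w x y)
    (hμ : ∀ x, 0 < μ x)
    (hconn : (SimpleGraph.fromRel fun x y => 0 < w x y).Connected)
    (u₀ f : V → ℝ) (N : ℝ)
    (u v : V → ℝ)
    (hu : ∀ x, lap w μ u x = Real.exp (u x + u₀ x) - 1 + 4 * π * N * f x)
    (hv : ∀ x, lap w μ v x = Real.exp (v x + u₀ x) - 1 + 4 * π * N * f x) :
    ∀ x, u x = v x := by
  have key : ∀ (a b : V → ℝ),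
      (∀ x, lap w μ a x = Real.exp (a x + u₀ x) - 1 + 4 * π * N * f x) →
      (∀ x, lap w μ b x = Real.exp (b x + u₀ x) - 1 + 4 * π * N * f x) →
      ∀ x, a x ≤ b x := by
    intro a b ha hb x
    have : Nonempty V := ⟨x⟩
    obtain ⟨x₀, -, hx₀⟩ := Finset.exists_max_image (univ : Finset V)
      (fun z => a z - b z) ⟨x, mem_univ x⟩
    have hlap : lap w μ a x₀ - lap w μ b x₀ ≤ 0 := by
      have : lap w μ a x₀ - lap w μ b x₀ =
          (1 / μ x₀) * ∑ y, w x₀ y * ((a y - b y) - (a x₀ - b x₀)) := by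
        simp only [lap, ← mul_sub, ← Finset.sum_sub_distrib]
        congr 1; apply Finset.sum_congr rfl; intro y _; ring
      rw [this]
      apply mul_nonpos_of_nonneg_of_nonpos
      · have := hμ x₀; positivity
      · apply Finset.sum_nonpos
        intro y _
        exact mul_nonpos_of_nonneg_of_nonpos (hnn _ _)
          (sub_nonpos.mpr (hx₀ y (mem_univ y)))
    rw [ha, hb] at hlap
    have hexp : Real.exp (a x₀ + u₀ x₀) ≤ Real.exp (b x₀ + u₀ x₀) := by linarith
    have h0 : a x₀ - b x₀ ≤ 0 := by
      have := Real.exp_le_exp.mp hexp; linarith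
    have := hx₀ x (mem_univ x)
    linarith
  intro x
  exact le_antisymm (key u v hu hv x) (key v u hv hu x)
end

section
/- Let G=(V,E) be a connected finite weighted graph, z_1,…,z_k distinct vertices, n_1,…,n_k positive integers, and δ_{z_s}(x) = 1/μ(z_s) if x = z_s, 0 otherwise. If u and v are both solutions of Δw = e^w − 1 + 4π Σ_{s=1}^k n_s δ_{z_s} on V, then u ≡ v on V. -/
open Finset Real Filter Topology

variable {V : Type*}

lemma aux_le [Fintype V] (w : V → V → ℝ) (μ : V → ℝ)
    (hnn : ∀ x y, 0 ≤ w x y) (hμ : ∀ x, 0 < μ x)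
    (u v g : V → ℝ)
    (hu : ∀ x, lap w μ u x = Real.exp (u x) + g x)
    (hv : ∀ x, lap w μ v x = Real.exp (v x) + g x) :
    ∀ x, u x ≤ v x := by
  intro x
  obtain ⟨x0, -, hx0⟩ := Finset.exists_max_image Finset.univ (fun a => u a - v a)
    ⟨x, Finset.mem_univ x⟩
  have hdiff : lap w μ u x0 - lap w μ v x0 ≤ 0 := by
    have : lap w μ u x0 - lap w μ v x0
        = (1 / μ x0) * ∑ y, w x0 y * ((u y - v y) - (u x0 - v x0)) := by
      unfold lap
      rw [← mul_sub, ← Finset.sum_sub_distrib]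
      congr 1; apply Finset.sum_congr rfl; intro y _; ring
    rw [this]
    apply mul_nonpos_of_nonneg_of_nonpos
    · exact div_nonneg zero_le_one (hμ x0).le
    · apply Finset.sum_nonpos
      intro y _
      have := hx0 y (Finset.mem_univ y)
      exact mul_nonpos_of_nonneg_of_nonpos (hnn x0 y) (by linarith)
  rw [hu, hv] at hdiff
  have h1 : Real.exp (u x0) ≤ Real.exp (v x0) := by linarith
  have h2 : u x0 - v x0 ≤ 0 := sub_nonpos.2 (Real.exp_le_exp.1 h1)
  have := hx0 x (Finset.mem_univ x)
  linarith

theorem uniqueness_bogomolnyi [Fintype V] [DecidableEq V]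
    (w : V → V → ℝ) (μ : V → ℝ)
    (hsym : ∀ x y, w x y = w y x) (hnn : ∀ x y, 0 ≤ w x y)
    (hμ : ∀ x, 0 < μ x)
    (hconn : (SimpleGraph.fromRel fun x y => 0 < w x y).Connected)
    (k : ℕ) (z : Fin k → V) (hz : Function.Injective z)
    (n : Fin k → ℕ) (hn : ∀ s, 0 < n s)
    (u v : V → ℝ)
    (hu : ∀ x, lap w μ u x =
      Real.exp (u x) - 1 + 4 * π * ∑ s, (n s : ℝ) * dirac μ (z s) x)
    (hv : ∀ x, lap w μ v x =
      Real.exp (v x) - 1 + 4 * π * ∑ s, (n s : ℝ) * dirac μ (z s) x) :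
    ∀ x, u x = v x := by
  set g : V → ℝ := fun x => -1 + 4 * π * ∑ s, (n s : ℝ) * dirac μ (z s) x with hg
  have hu' : ∀ x, lap w μ u x = Real.exp (u x) + g x := by intro x; rw [hu]; ring
  have hv' : ∀ x, lap w μ v x = Real.exp (v x) + g x := by intro x; rw [hv]; ring
  intro x
  exact le_antisymm (aux_le w μ hnn hμ u v g hu' hv' x)
    (aux_le w μ hnn hμ v u g hv' hu' x)
end

section
/- Let G=(V,E) be a connected finite weighted graph with total volume |V| = Σ_{x∈V} μ(x), let N > 0, and let f: V → ℝ with ∫_V f dμ = 1 and u_0: V → ℝ. If there exists a solution v of Δv = e^{v + u_0} − 1 + 4πN f on V, then 4πN < |V|. -/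
open Finset Real Filter Topology

variable {V : Type*}

theorem necessary_condition_shifted [Fintype V] [DecidableEq V]
    (w : V → V → ℝ) (μ : V → ℝ)
    (hsym : ∀ x y, w x y = w y x) (hnn : ∀ x y, 0 ≤ w x y)
    (hμ : ∀ x, 0 < μ x)
    (hconn : (SimpleGraph.fromRel fun x y => 0 < w x y).Connected)
    (N : ℝ) (hN : 0 < N) (f : V → ℝ) (hf : intV μ f = 1) (u₀ : V → ℝ)
    (v : V → ℝ)
    (hv : ∀ x, lap w μ v x = Real.exp (v x + u₀ x) - 1 + 4 * π * N * f x) :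
    4 * π * N < ∑ x, μ x := by
  have hV : Nonempty V := hconn.nonempty
  have key : intV μ (lap w μ v) = 0 := by
    unfold intV lap
    have h1 : ∀ x : V, μ x * ((1 / μ x) * ∑ y, w x y * (v y - v x))
        = ∑ y, w x y * (v y - v x) := by
      intro x
      field_simp
      exact mul_div_cancel_left₀ _ (hμ x).ne'
    simp only [h1]
    have hS : (∑ x : V, ∑ y : V, w x y * (v y - v x))
        = - ∑ x : V, ∑ y : V, w x y * (v y - v x) := by
      conv_lhs => rw [Finset.sum_comm]
      rw [← Finset.sum_neg_distrib]
      refine Finset.sum_congr rfl fun x _ => ?_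
      rw [← Finset.sum_neg_distrib]
      refine Finset.sum_congr rfl fun y _ => ?_
      rw [hsym y x]; ring
    linarith
  have h2 : intV μ (fun x => Real.exp (v x + u₀ x) - 1 + 4 * π * N * f x) = 0 := by
    rw [← key]; unfold intV; exact Finset.sum_congr rfl fun x _ => by rw [hv x]
  unfold intV at h2 hf
  have hexp : 0 < ∑ x, μ x * Real.exp (v x + u₀ x) :=
    Finset.sum_pos (fun x _ => mul_pos (hμ x) (Real.exp_pos _)) Finset.univ_nonempty
  have e1 : (∑ x, μ x * (Real.exp (v x + u₀ x) - 1 + 4 * π * N * f x))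
      = (∑ x, μ x * Real.exp (v x + u₀ x)) - (∑ x, μ x) + 4 * π * N * ∑ x, μ x * f x := by
    rw [Finset.mul_sum]
    simp only [← Finset.sum_add_distrib, ← Finset.sum_sub_distrib]
    exact Finset.sum_congr rfl fun x _ => by ring
  rw [e1, hf] at h2
  linarith
end

section
/- Let G=(V,E) be a connected finite weighted graph, f: V → ℝ with ∫_V f dμ = 1, u_0: V → ℝ, and N > 0 with 4πN < |V|. Then there exist functions U, Z: V → ℝ with Z ≤ U on V such that ΔU − e^{U+u_0} − (4πN f − 1) ≤ 0 on V (U is a supersolution) and ΔZ − e^{Z+u_0} − (4πN f − 1) ≥ 0 on V (Z is a subsolution). -/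
open Finset Real Filter Topology

variable {V : Type*}

/-- The Laplacian as a linear map. -/
noncomputable def lapL [Fintype V] (w : V → V → ℝ) (μ : V → ℝ) :
    (V → ℝ) →ₗ[ℝ] (V → ℝ) where
  toFun u := lap w μ u
  map_add' u v := funext fun x => by
    simp only [lap, Pi.add_apply]
    have h1 : ∑ y, w x y * ((u y + v y) - (u x + v x))
        = (∑ y, w x y * (u y - u x)) + ∑ y, w x y * (v y - v x) := by
      rw [← Finset.sum_add_distrib]
      exact Finset.sum_congr rfl fun y _ => by ring
    rw [h1]; ring
  map_smul' c u := funext fun x => by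
    simp only [lap, Pi.smul_apply, smul_eq_mul, RingHom.id_apply]
    have h1 : ∑ y, w x y * (c * u y - c * u x) = c * ∑ y, w x y * (u y - u x) := by
      rw [Finset.mul_sum]
      exact Finset.sum_congr rfl fun y _ => by ring
    rw [h1]; ring

theorem lap_surj_on_meanzero [Fintype V] [DecidableEq V] [Nonempty V]
    (w : V → V → ℝ) (μ : V → ℝ)
    (hsym : ∀ x y, w x y = w y x) (hnn : ∀ x y, 0 ≤ w x y) (hμ : ∀ x, 0 < μ x)
    (hconn : (SimpleGraph.fromRel fun x y => 0 < w x y).Connected)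
    (g : V → ℝ) (hg : ∑ x, μ x * g x = 0) :
    ∃ u : V → ℝ, ∀ x, lap w μ u x = g x := by
  classical
  set φ : (V → ℝ) →ₗ[ℝ] ℝ :=
    { toFun := fun u => ∑ x, μ x * u x
      map_add' := fun u v => by
        simp only [Pi.add_apply, mul_add]
        exact Finset.sum_add_distrib
      map_smul' := fun c u => by
        simp only [Pi.smul_apply, smul_eq_mul, RingHom.id_apply]
        rw [Finset.mul_sum]
        exact Finset.sum_congr rfl fun y _ => by ring } with hφ
  have hrange : LinearMap.range (lapL w μ) ≤ LinearMap.ker φ := by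
    rintro _ ⟨u, rfl⟩
    have h1 : φ (lapL w μ u) = ∑ x, ∑ y, w x y * (u y - u x) := by
      simp only [hφ, lapL, LinearMap.coe_mk, AddHom.coe_mk, lap]
      refine Finset.sum_congr rfl fun x _ => ?_
      rw [← mul_assoc, mul_one_div_cancel (hμ x).ne', one_mul]
    have h2 : ∑ x, ∑ y, w x y * (u y - u x) = -∑ x, ∑ y, w x y * (u y - u x) := by
      conv_lhs => rw [Finset.sum_comm]
      rw [← Finset.sum_neg_distrib]
      refine Finset.sum_congr rfl fun a _ => ?_
      rw [← Finset.sum_neg_distrib]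
      refine Finset.sum_congr rfl fun b _ => ?_
      rw [hsym]; ring
    have h3 : ∑ x, ∑ y, w x y * (u y - u x) = 0 := by linarith
    exact LinearMap.mem_ker.mpr (by rw [h1, h3])
  have hker : LinearMap.ker (lapL w μ) = Submodule.span ℝ {(fun _ => 1 : V → ℝ)} := by
    apply le_antisymm
    · intro u hu
      have hu' : ∀ x, ∑ y, w x y * (u y - u x) = 0 := by
        intro x
        have h := congrFun (LinearMap.mem_ker.mp hu) x
        simp only [lapL, LinearMap.coe_mk, AddHom.coe_mk, lap, Pi.zero_apply] at h
        have hμx : (1 : ℝ) / μ x ≠ 0 := one_div_ne_zero (hμ x).ne'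
        exact (mul_eq_zero.mp h).resolve_left hμx
      obtain ⟨x0, -, hx0⟩ := Finset.exists_max_image Finset.univ u Finset.univ_nonempty
      have step : ∀ x, u x = u x0 → ∀ y, 0 < w x y → u y = u x0 := by
        intro x hx y hwy
        have hnonpos : ∀ z ∈ Finset.univ, w x z * (u z - u x) ≤ 0 := fun z _ =>
          mul_nonpos_of_nonneg_of_nonpos (hnn x z)
            (by have := hx0 z (Finset.mem_univ z); rw [hx]; linarith)
        have hterm : w x y * (u y - u x) = 0 :=
          (Finset.sum_eq_zero_iff_of_nonpos hnonpos).mp (hu' x) y (Finset.mem_univ y)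
        have : u y - u x = 0 := (mul_eq_zero.mp hterm).resolve_left hwy.ne'
        rw [← hx]; linarith
      have hconst : ∀ z, u z = u x0 := by
        have walkp : ∀ a b (p : (SimpleGraph.fromRel fun x y => 0 < w x y).Walk a b),
            u a = u x0 → u b = u x0 := by
          intro a b p
          induction p with
          | nil => exact id
          | @cons a c b hadj q ih =>
            intro ha
            obtain ⟨-, hc⟩ := (SimpleGraph.fromRel_adj _ _ _).mp hadj
            have hw : 0 < w a c := by
              rcases hc with h | h
              · exact h
              · rwa [hsym]
            exact ih (step a ha c hw)
        intro z
        obtain ⟨p⟩ := hconn.preconnected x0 z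
        exact walkp x0 z p rfl
      refine Submodule.mem_span_singleton.mpr ⟨u x0, funext fun z => ?_⟩
      simp [hconst z]
    · rw [Submodule.span_le, Set.singleton_subset_iff]
      refine LinearMap.mem_ker.mpr (funext fun x => ?_)
      simp [lapL, lap]
  have hone : (fun _ => (1:ℝ) : V → ℝ) ≠ 0 := by
    intro h
    have := congrFun h (Classical.arbitrary V)
    simp at this
  have h1 : Module.finrank ℝ (LinearMap.ker (lapL w μ)) = 1 := by
    rw [hker]
    exact finrank_span_singleton hone
  have hφsurj : LinearMap.range φ = ⊤ := by
    rw [LinearMap.range_eq_top]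
    intro r
    have hS : (0:ℝ) < ∑ x, μ x := Finset.sum_pos (fun x _ => hμ x) Finset.univ_nonempty
    refine ⟨fun _ => r / ∑ x, μ x, ?_⟩
    simp only [hφ, LinearMap.coe_mk, AddHom.coe_mk]
    rw [← Finset.sum_mul, mul_comm, div_mul_cancel₀ _ hS.ne']
  have h2 : Module.finrank ℝ (LinearMap.ker φ) + 1 = Fintype.card V := by
    have h := LinearMap.finrank_range_add_finrank_ker φ
    rw [hφsurj, finrank_top, Module.finrank_self, Module.finrank_pi] at h
    omega
  have h3 : Module.finrank ℝ (LinearMap.range (lapL w μ)) + 1 = Fintype.card V := by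
    have h := LinearMap.finrank_range_add_finrank_ker (lapL w μ)
    rw [h1, Module.finrank_pi] at h
    exact h
  have heq : LinearMap.range (lapL w μ) = LinearMap.ker φ :=
    Submodule.eq_of_le_of_finrank_eq hrange (by omega)
  have hmem : g ∈ LinearMap.range (lapL w μ) := by
    rw [heq]
    exact LinearMap.mem_ker.mpr hg
  obtain ⟨u, hu⟩ := hmem
  exact ⟨u, fun x => congrFun hu x⟩

theorem sub_super_solutions_exist [Fintype V] [DecidableEq V]
    (w : V → V → ℝ) (μ : V → ℝ)
    (hsym : ∀ x y, w x y = w y x) (hnn : ∀ x y, 0 ≤ w x y)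
    (hμ : ∀ x, 0 < μ x)
    (hconn : (SimpleGraph.fromRel fun x y => 0 < w x y).Connected)
    (f : V → ℝ) (hf : intV μ f = 1) (u₀ : V → ℝ)
    (N : ℝ) (hN : 0 < N) (hvol : 4 * π * N < ∑ x, μ x) :
    ∃ U Z : V → ℝ, (∀ x, Z x ≤ U x) ∧
      (∀ x, lap w μ U x - Real.exp (U x + u₀ x) - (4 * π * N * f x - 1) ≤ 0) ∧
      (∀ x, lap w μ Z x - Real.exp (Z x + u₀ x) - (4 * π * N * f x - 1) ≥ 0) := by
  classical
  cases isEmpty_or_nonempty V with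
  | inl h =>
    exact ⟨0, 0, fun x => isEmptyElim x, fun x => isEmptyElim x, fun x => isEmptyElim x⟩
  | inr h =>
    set S := ∑ x, μ x with hSdef
    have hS0 : 0 < S := Finset.sum_pos (fun x _ => hμ x) Finset.univ_nonempty
    set a := 4 * π * N with ha
    have ha0 : 0 < a := by
      have hπ : 0 < π := Real.pi_pos
      positivity
    have hε : 0 < 1 - a / S := by
      rw [sub_pos, div_lt_one hS0]
      exact hvol
    have hf' : ∑ x, μ x * f x = 1 := hf
    have hg : ∑ x, μ x * (a * f x - a / S) = 0 := by
      have h1 : ∑ x, μ x * (a * f x - a / S)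
          = a * (∑ x, μ x * f x) - (∑ x, μ x) * (a / S) := by
        rw [Finset.mul_sum, Finset.sum_mul, ← Finset.sum_sub_distrib]
        exact Finset.sum_congr rfl fun x _ => by ring
      rw [h1, hf', mul_one, ← hSdef, mul_comm, div_mul_cancel₀ _ hS0.ne', sub_self]
    obtain ⟨Z0, hZ0⟩ := lap_surj_on_meanzero w μ hsym hnn hμ hconn
      (fun x => a * f x - a / S) hg
    set C := (Finset.univ.sup' Finset.univ_nonempty fun x => Z0 x + u₀ x)
      - Real.log (1 - a / S) with hC
    set Z : V → ℝ := fun x => Z0 x - C with hZdef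
    have hlapZ : ∀ x, lap w μ Z x = lap w μ Z0 x := by
      intro x
      unfold lap
      congr 1
      refine Finset.sum_congr rfl fun y _ => ?_
      simp only [hZdef]
      ring
    have hZbound : ∀ x, Real.exp (Z x + u₀ x) ≤ 1 - a / S := by
      intro x
      have hle : Z0 x + u₀ x ≤ Finset.univ.sup' Finset.univ_nonempty fun x => Z0 x + u₀ x :=
        Finset.le_sup' (fun x => Z0 x + u₀ x) (Finset.mem_univ x)
      have h1 : Z x + u₀ x ≤ Real.log (1 - a / S) := by
        simp only [hZdef, hC]
        linarith
      calc Real.exp (Z x + u₀ x) ≤ Real.exp (Real.log (1 - a / S)) :=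
            Real.exp_le_exp.mpr h1
        _ = 1 - a / S := Real.exp_log hε
    have hsub : ∀ x, lap w μ Z x - Real.exp (Z x + u₀ x) - (a * f x - 1) ≥ 0 := by
      intro x
      rw [hlapZ, hZ0]
      have := hZbound x
      linarith
    set c := Finset.univ.sup' Finset.univ_nonempty
      (fun x => max (Z x) (Real.log (max 1 (1 - a * f x)) - u₀ x)) with hc
    refine ⟨fun _ => c, Z, ?_, ?_, hsub⟩
    · intro x
      calc Z x ≤ max (Z x) (Real.log (max 1 (1 - a * f x)) - u₀ x) := le_max_left _ _
        _ ≤ c := hc ▸ Finset.le_sup'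
            (fun x => max (Z x) (Real.log (max 1 (1 - a * f x)) - u₀ x)) (Finset.mem_univ x)
    · intro x
      have hlapU : lap w μ (fun _ => c) x = 0 := by
        simp [lap]
      have hm : (0:ℝ) < max 1 (1 - a * f x) := lt_of_lt_of_le one_pos (le_max_left _ _)
      have h2 : Real.log (max 1 (1 - a * f x)) - u₀ x ≤ c :=
        le_trans (le_max_right _ _) (hc ▸ Finset.le_sup'
          (fun x => max (Z x) (Real.log (max 1 (1 - a * f x)) - u₀ x)) (Finset.mem_univ x))
      have h1 : 1 - a * f x ≤ Real.exp (c + u₀ x) := by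
        calc 1 - a * f x ≤ max 1 (1 - a * f x) := le_max_right _ _
          _ = Real.exp (Real.log (max 1 (1 - a * f x))) := (Real.exp_log hm).symm
          _ ≤ Real.exp (c + u₀ x) := Real.exp_le_exp.mpr (by linarith)
      rw [hlapU]
      linarith
end

section
/- Let G=(V,E) be a connected finite weighted graph, u_0, f: V → ℝ, N > 0, and let U be a supersolution and Z ≤ U a subsolution of Δw = e^{w+u_0} − 1 + 4πN f. Define the iteration w_0 = U and (Δ − K)w_{n+1} = e^{u_0 + w_n} − K w_n + 4πNf − 1 for a constant K > max_V e^{u_0 + U}. Then the sequence w_n is monotone non-increasing, satisfies Z ≤ w_n ≤ U for all n, and converges pointwise to the unique solution W of Δw = e^{w+u_0} − 1 + 4πNf on V. -/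
open Finset Real Filter Topology

variable {V : Type*}

lemma lap_sub [Fintype V] (w : V → V → ℝ) (μ : V → ℝ) (u v : V → ℝ) (x : V) :
    lap w μ (fun y => u y - v y) x = lap w μ u x - lap w μ v x := by
  simp only [lap, ← mul_sub, ← Finset.sum_sub_distrib]
  congr 1
  exact Finset.sum_congr rfl fun y _ => by ring

lemma lap_nonpos_at_max [Fintype V] (w : V → V → ℝ) (μ : V → ℝ)
    (hnn : ∀ x y, 0 ≤ w x y) (hμ : ∀ x, 0 < μ x) (u : V → ℝ) (x₀ : V)
    (hx₀ : ∀ y, u y ≤ u x₀) : lap w μ u x₀ ≤ 0 := by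
  apply mul_nonpos_of_nonneg_of_nonpos
  · have := hμ x₀; positivity
  · exact Finset.sum_nonpos fun y _ =>
      mul_nonpos_of_nonneg_of_nonpos (hnn x₀ y) (sub_nonpos.2 (hx₀ y))

lemma maxp [Fintype V] (w : V → V → ℝ) (μ : V → ℝ)
    (hnn : ∀ x y, 0 ≤ w x y) (hμ : ∀ x, 0 < μ x)
    (K : ℝ) (hK : 0 < K) (u : V → ℝ) (h : ∀ x, K * u x ≤ lap w μ u x) (x : V) :
    u x ≤ 0 := by
  have : Nonempty V := ⟨x⟩
  obtain ⟨x₀, hx₀⟩ := Finite.exists_max u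
  have hlap := lap_nonpos_at_max w μ hnn hμ u x₀ hx₀
  have h1 := (h x₀).trans hlap
  nlinarith [hx₀ x]

theorem monotone_iteration [Fintype V] [DecidableEq V]
    (w : V → V → ℝ) (μ : V → ℝ)
    (hsym : ∀ x y, w x y = w y x) (hnn : ∀ x y, 0 ≤ w x y)
    (hμ : ∀ x, 0 < μ x)
    (hconn : (SimpleGraph.fromRel fun x y => 0 < w x y).Connected)
    (u₀ f : V → ℝ) (N : ℝ) (hN : 0 < N)
    (U Z : V → ℝ) (hZU : ∀ x, Z x ≤ U x)
    (hU : ∀ x, lap w μ U x - Real.exp (U x + u₀ x) - (4 * π * N * f x - 1) ≤ 0)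
    (hZ : ∀ x, lap w μ Z x - Real.exp (Z x + u₀ x) - (4 * π * N * f x - 1) ≥ 0)
    (K : ℝ) (hK : ∀ x, Real.exp (u₀ x + U x) < K)
    (wseq : ℕ → V → ℝ) (hw0 : wseq 0 = U)
    (hiter : ∀ m x, lap w μ (wseq (m + 1)) x - K * wseq (m + 1) x =
      Real.exp (u₀ x + wseq m x) - K * wseq m x + 4 * π * N * f x - 1) :
    (∀ m x, wseq (m + 1) x ≤ wseq m x) ∧
    (∀ m x, Z x ≤ wseq m x ∧ wseq m x ≤ U x) ∧
    (∃ W : V → ℝ,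
      (∀ x, Tendsto (fun m => wseq m x) atTop (nhds (W x))) ∧
      (∀ x, lap w μ W x = Real.exp (W x + u₀ x) - 1 + 4 * π * N * f x) ∧
      (∀ W' : V → ℝ,
        (∀ x, lap w μ W' x = Real.exp (W' x + u₀ x) - 1 + 4 * π * N * f x) →
        W' = W)) := by
  rcases isEmpty_or_nonempty V with hV | hV
  · exact ⟨fun m x => isEmptyElim x, fun m x => isEmptyElim x, fun _ => 0,
      fun x => isEmptyElim x, fun x => isEmptyElim x,
      fun W' _ => funext fun x => isEmptyElim x⟩
  obtain ⟨xs⟩ := hV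
  have hK0 : 0 < K := (Real.exp_pos _).trans (hK xs)
  have h0 : ∀ x, wseq 0 x = U x := fun x => by rw [hw0]
  -- monotonicity of g(t) = exp (u₀ + t) - K t on (-∞, U]
  have hg : ∀ x a b, a ≤ b → b ≤ U x →
      Real.exp (u₀ x + b) - K * b ≤ Real.exp (u₀ x + a) - K * a := by
    intro x a b hab hbU
    have hE : Real.exp (u₀ x + b) ≤ K :=
      le_of_lt (lt_of_le_of_lt (Real.exp_le_exp.2 (by linarith)) (hK x))
    have h1 : Real.exp (u₀ x + b) * (a - b + 1) ≤ Real.exp (u₀ x + a) := by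
      have h2 : a - b + 1 ≤ Real.exp (a - b) := by linarith [Real.add_one_le_exp (a - b)]
      calc Real.exp (u₀ x + b) * (a - b + 1)
          ≤ Real.exp (u₀ x + b) * Real.exp (a - b) :=
            mul_le_mul_of_nonneg_left h2 (Real.exp_pos _).le
        _ = Real.exp (u₀ x + a) := by rw [← Real.exp_add]; ring_nf
    have h3 : Real.exp (u₀ x + b) * (b - a) ≤ K * (b - a) :=
      mul_le_mul_of_nonneg_right hE (by linarith)
    nlinarith
  -- comparison via max principle
  have step : ∀ (a b : V → ℝ),
      (∀ x, K * (a x - b x) ≤ lap w μ a x - lap w μ b x) → ∀ x, a x ≤ b x := by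
    intro a b h x
    have := maxp w μ hnn hμ K hK0 (fun y => a y - b y)
      (fun y => by rw [lap_sub]; exact h y) x
    linarith
  -- main induction
  have key : ∀ m, (∀ x, Z x ≤ wseq m x) ∧ (∀ x, wseq m x ≤ U x) ∧
      (∀ x, wseq (m + 1) x ≤ wseq m x) := by
    intro m
    induction m with
    | zero =>
      refine ⟨fun x => (h0 x).symm ▸ hZU x, fun x => (h0 x).le, ?_⟩
      apply step
      intro x
      have h1 := hiter 0 x
      rw [h0 x] at h1
      have h2 := hU x
      have h3 : lap w μ (wseq 0) x = lap w μ U x := by rw [hw0]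
      have hec : Real.exp (U x + u₀ x) = Real.exp (u₀ x + U x) := by rw [add_comm]
      rw [h3, h0 x]
      linarith
    | succ n ih =>
      obtain ⟨hZn, hnU, hmono⟩ := ih
      have hZn1 : ∀ x, Z x ≤ wseq (n + 1) x := by
        intro x
        revert x
        apply step
        intro x
        have h1 := hiter n x
        have h2 := hZ x
        have hgx := hg x (Z x) (wseq n x) (hZn x) (hnU x)
        have hec : Real.exp (Z x + u₀ x) = Real.exp (u₀ x + Z x) := by rw [add_comm]
        linarith
      have hn1U : ∀ x, wseq (n + 1) x ≤ U x := fun x => (hmono x).trans (hnU x)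
      refine ⟨hZn1, hn1U, ?_⟩
      apply step
      intro x
      have h1 := hiter (n + 1) x
      have h2 := hiter n x
      have hgx := hg x (wseq (n + 1) x) (wseq n x) (hmono x) (hnU x)
      linarith
  refine ⟨fun m => (key m).2.2, fun m x => ⟨(key m).1 x, (key m).2.1 x⟩, ?_⟩
  -- convergence
  have hanti : ∀ x, Antitone fun m => wseq m x :=
    fun x => antitone_nat_of_succ_le fun n => (key n).2.2 x
  set W : V → ℝ := fun x => ⨅ m, wseq m x with hWdef
  have hconv : ∀ x, Tendsto (fun m => wseq m x) atTop (nhds (W x)) := by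
    intro x
    exact tendsto_atTop_ciInf (hanti x) ⟨Z x, by rintro r ⟨m, rfl⟩; exact (key m).1 x⟩
  have hconv1 : ∀ x, Tendsto (fun m => wseq (m + 1) x) atTop (nhds (W x)) :=
    fun x => (hconv x).comp (tendsto_add_atTop_nat 1)
  have hWeq : ∀ x, lap w μ W x = Real.exp (W x + u₀ x) - 1 + 4 * π * N * f x := by
    intro x
    have hL : Tendsto (fun m => lap w μ (wseq (m + 1)) x - K * wseq (m + 1) x) atTop
        (nhds (lap w μ W x - K * W x)) := by
      have hA : Tendsto (fun m => lap w μ (wseq (m + 1)) x) atTop (nhds (lap w μ W x)) := by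
        simp only [lap]
        exact Tendsto.const_mul _ (tendsto_finset_sum _ fun y _ =>
          Tendsto.const_mul _ ((hconv1 y).sub (hconv1 x)))
      exact hA.sub ((hconv1 x).const_mul K)
    have hR : Tendsto (fun m => Real.exp (u₀ x + wseq m x) - K * wseq m x
        + 4 * π * N * f x - 1) atTop
        (nhds (Real.exp (u₀ x + W x) - K * W x + 4 * π * N * f x - 1)) := by
      have h1 : Tendsto (fun m => Real.exp (u₀ x + wseq m x)) atTop
          (nhds (Real.exp (u₀ x + W x))) :=
        (Real.continuous_exp.tendsto _).comp (tendsto_const_nhds.add (hconv x))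
      have h2 : Tendsto (fun m => K * wseq m x) atTop (nhds (K * W x)) :=
        (hconv x).const_mul K
      exact ((h1.sub h2).add_const _).sub_const _
    have heq : (fun m => lap w μ (wseq (m + 1)) x - K * wseq (m + 1) x)
        = fun m => Real.exp (u₀ x + wseq m x) - K * wseq m x + 4 * π * N * f x - 1 :=
      funext fun m => hiter m x
    rw [heq] at hL
    have := tendsto_nhds_unique hL hR
    have hec : Real.exp (W x + u₀ x) = Real.exp (u₀ x + W x) := by rw [add_comm]
    linarith
  refine ⟨W, hconv, hWeq, ?_⟩
  -- uniqueness
  have uniq : ∀ A B : V → ℝ,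
      (∀ x, lap w μ A x = Real.exp (A x + u₀ x) - 1 + 4 * π * N * f x) →
      (∀ x, lap w μ B x = Real.exp (B x + u₀ x) - 1 + 4 * π * N * f x) →
      ∀ x, A x ≤ B x := by
    intro A B hA hB x
    have : Nonempty V := ⟨x⟩
    obtain ⟨x₀, hx₀⟩ := Finite.exists_max fun y => A y - B y
    by_contra hc
    push_neg at hc
    have hpos : 0 < A x₀ - B x₀ := lt_of_lt_of_le (by linarith) (hx₀ x)
    have hlap : lap w μ (fun y => A y - B y) x₀ ≤ 0 :=
      lap_nonpos_at_max w μ hnn hμ _ x₀ hx₀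
    rw [lap_sub] at hlap
    have hAB := hA x₀
    have hBB := hB x₀
    have hlt : Real.exp (B x₀ + u₀ x₀) < Real.exp (A x₀ + u₀ x₀) :=
      Real.exp_lt_exp.2 (by linarith)
    linarith
  intro W' hW'
  exact funext fun x => le_antisymm (uniq W' W hW' hWeq x) (uniq W W' hWeq hW' x)
end

section
/- Let G=(V,E) be a connected finite weighted graph. For all functions u: V → ℝ with ∫_V u dμ = 0, there exists a constant C depending only on G such that ∫_V u² dμ ≤ C ∫_V |∇u|² dμ, where |∇u|²(x) = (1/(2μ(x))) Σ_{y∼x} w_{xy}(u(y) − u(x))². -/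
open Finset Real Filter Topology

variable {V : Type*}

lemma walk_sq_bound (w : V → V → ℝ)
    (hsym : ∀ x y, w x y = w y x) (u : V → ℝ) (K : ℝ) (hK : 0 ≤ K)
    (hedge : ∀ a b, 0 < w a b → (u a - u b)^2 ≤ K) :
    ∀ {x y : V} (p : (SimpleGraph.fromRel fun a b => 0 < w a b).Walk x y),
      (u x - u y)^2 ≤ 4 ^ p.length * K := by
  intro x y p
  induction p with
  | nil => simpa using hK
  | @cons x b y h p ih =>
      rw [SimpleGraph.fromRel_adj] at h
      have hwx : 0 < w x b := by
        rcases h.2 with h' | h'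
        · exact h'
        · rw [hsym]; exact h'
      have hA : (u x - u b)^2 ≤ K := hedge _ _ hwx
      have hP : (1:ℝ) ≤ 4 ^ p.length := one_le_pow₀ (by norm_num)
      have hKP : 0 ≤ ((4:ℝ) ^ p.length - 1) * K := mul_nonneg (by linarith) hK
      have hgoal : (4:ℝ) ^ (p.length + 1) = 4 * 4 ^ p.length := by ring
      show (u x - u y)^2 ≤ 4 ^ (p.length + 1) * K
      rw [hgoal]
      nlinarith [sq_nonneg ((u x - u b) - (u b - u y))]

theorem poincare_inequality [Fintype V] [DecidableEq V]
    (w : V → V → ℝ) (μ : V → ℝ)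
    (hsym : ∀ x y, w x y = w y x) (hnn : ∀ x y, 0 ≤ w x y)
    (hμ : ∀ x, 0 < μ x)
    (hconn : (SimpleGraph.fromRel fun x y => 0 < w x y).Connected) :
    ∃ C : ℝ, ∀ u : V → ℝ, intV μ u = 0 →
      intV μ (fun x => u x ^ 2) ≤ C * intV μ (gam w μ u u) := by
  classical
  have hne : Nonempty V := hconn.nonempty
  rcases subsingleton_or_nontrivial V with hsub | hnt
  · -- subsingleton case
    refine ⟨0, fun u hu => ?_⟩
    obtain ⟨x₀⟩ := hne
    have huniv : (univ : Finset V) = {x₀} := by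
      apply Finset.eq_singleton_iff_unique_mem.mpr
      exact ⟨mem_univ _, fun y _ => Subsingleton.elim y x₀⟩
    have hu0 : u x₀ = 0 := by
      have : μ x₀ * u x₀ = 0 := by
        have := hu
        rwa [intV, huniv, Finset.sum_singleton] at this
      rcases mul_eq_zero.mp this with h | h
      · exact absurd h (ne_of_gt (hμ x₀))
      · exact h
    rw [intV, huniv, Finset.sum_singleton, hu0]
    simp
  · -- nontrivial case
    set G := SimpleGraph.fromRel fun a b => 0 < w a b with hG
    -- positive-weight pairs
    set EF : Finset (V × V) := univ.filter (fun p => 0 < w p.1 p.2) with hEF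
    have hEFne : EF.Nonempty := by
      obtain ⟨a, b, hab⟩ := hnt
      obtain ⟨p⟩ := hconn.preconnected a b
      have hex : ∃ s t, 0 < w s t := by
        cases p with
        | nil => exact absurd rfl hab
        | cons h q =>
            rw [SimpleGraph.fromRel_adj] at h
            rcases h.2 with h' | h'
            · exact ⟨_, _, h'⟩
            · exact ⟨_, _, h'⟩
      obtain ⟨s, t, hst⟩ := hex
      exact ⟨(s, t), Finset.mem_filter.mpr ⟨mem_univ _, hst⟩⟩
    set c : ℝ := EF.inf' hEFne (fun p => w p.1 p.2) with hc
    have hcpos : 0 < c := by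
      rw [hc, Finset.lt_inf'_iff]
      intro p hp
      exact (Finset.mem_filter.mp hp).2
    have hcle : ∀ a b, 0 < w a b → c ≤ w a b := by
      intro a b hab
      exact Finset.inf'_le (fun p : V × V => w p.1 p.2) (Finset.mem_filter.mpr ⟨mem_univ ((a, b) : V × V), hab⟩)
    -- walks
    have wlk : ∀ x y : V, G.Walk x y := fun x y => Classical.choice (hconn.preconnected x y)
    set L : ℕ := univ.sup (fun p : V × V => (wlk p.1 p.2).length) with hL
    have hLle : ∀ x y, (wlk x y).length ≤ L := fun x y =>
      Finset.le_sup (f := fun p : V × V => (wlk p.1 p.2).length) (mem_univ (x, y))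
    set M : ℝ := ∑ x, μ x with hM
    have hMpos : 0 < M := Finset.sum_pos (fun x _ => hμ x) univ_nonempty
    refine ⟨2 * M * 4 ^ L / c, fun u hu => ?_⟩
    -- energy
    set S : ℝ := ∑ x, ∑ y, w x y * (u y - u x)^2 with hS
    have hSnn : 0 ≤ S :=
      Finset.sum_nonneg fun x _ => Finset.sum_nonneg fun y _ =>
        mul_nonneg (hnn x y) (sq_nonneg _)
    have hSgam : intV μ (gam w μ u u) = S / 2 := by
      rw [intV, hS]
      rw [Finset.sum_div]
      refine Finset.sum_congr rfl fun x _ => ?_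
      rw [gam, ← mul_assoc]
      have hfac : μ x * (1 / (2 * μ x)) = 1 / 2 := by
        rw [mul_one_div, mul_comm 2 (μ x), ← div_div, div_self (hμ x).ne']
      rw [hfac]
      have h2 : ∑ y, w x y * (u y - u x) * (u y - u x) = ∑ y, w x y * (u y - u x)^2 :=
        Finset.sum_congr rfl fun y _ => by ring
      rw [h2]; ring
    set K : ℝ := S / c with hK
    have hKnn : 0 ≤ K := div_nonneg hSnn hcpos.le
    have hedge : ∀ a b, 0 < w a b → (u a - u b)^2 ≤ K := by
      intro a b hab
      have h1 : w a b * (u b - u a)^2 ≤ S := by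
        rw [hS]
        calc w a b * (u b - u a)^2
            ≤ ∑ y, w a y * (u y - u a)^2 :=
              Finset.single_le_sum (f := fun y => w a y * (u y - u a)^2)
                (fun y _ => mul_nonneg (hnn a y) (sq_nonneg _)) (mem_univ b)
          _ ≤ ∑ x, ∑ y, w x y * (u y - u x)^2 :=
              Finset.single_le_sum (f := fun x => ∑ y, w x y * (u y - u x)^2)
                (fun x _ => Finset.sum_nonneg fun y _ => mul_nonneg (hnn x y) (sq_nonneg _))
                (mem_univ a)
      have h2 : c * (u a - u b)^2 ≤ w a b * (u b - u a)^2 := by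
        have hsq : (u a - u b)^2 = (u b - u a)^2 := by ring
        rw [hsq]
        exact mul_le_mul_of_nonneg_right (hcle a b hab) (sq_nonneg _)
      rw [hK, le_div_iff₀ hcpos]
      nlinarith
    -- pairwise bound
    have hpair : ∀ x y, (u x - u y)^2 ≤ 4 ^ L * K := by
      intro x y
      calc (u x - u y)^2 ≤ 4 ^ (wlk x y).length * K :=
            walk_sq_bound w hsym u K hKnn hedge (wlk x y)
        _ ≤ 4 ^ L * K := by
            apply mul_le_mul_of_nonneg_right _ hKnn
            exact pow_le_pow_right₀ (by norm_num) (hLle x y)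
    -- pointwise bound on u x ^ 2
    have hpt : ∀ x, u x ^ 2 ≤ 4 ^ L * K := by
      intro x
      have hmean : ∑ y, μ y * (u x - u y) = M * u x := by
        have : ∑ y, μ y * u y = 0 := hu
        rw [hM]
        simp_rw [mul_sub]
        rw [Finset.sum_sub_distrib, this, Finset.sum_mul]
        ring
      have hCS : (∑ y, μ y * (u x - u y))^2
          ≤ (∑ y, μ y) * ∑ y, μ y * (u x - u y)^2 := by
        have := Finset.sum_mul_sq_le_sq_mul_sq univ
          (fun y => Real.sqrt (μ y)) (fun y => Real.sqrt (μ y) * (u x - u y))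
        have e1 : ∀ y : V, Real.sqrt (μ y) * (Real.sqrt (μ y) * (u x - u y))
            = μ y * (u x - u y) := by
          intro y
          rw [← mul_assoc, Real.mul_self_sqrt (hμ y).le]
        have e2 : ∀ y : V, Real.sqrt (μ y) ^ 2 = μ y := fun y => Real.sq_sqrt (hμ y).le
        have e3 : ∀ y : V, (Real.sqrt (μ y) * (u x - u y)) ^ 2 = μ y * (u x - u y)^2 := by
          intro y
          rw [mul_pow, e2]
        simp_rw [e1, e2, e3] at this
        exact this
      have hsum2 : ∑ y, μ y * (u x - u y)^2 ≤ M * (4 ^ L * K) := by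
        rw [hM, Finset.sum_mul]
        exact Finset.sum_le_sum fun y _ =>
          mul_le_mul_of_nonneg_left (hpair x y) (hμ y).le
      have : (M * u x)^2 ≤ M * (M * (4 ^ L * K)) := by
        rw [← hmean]
        calc (∑ y, μ y * (u x - u y))^2 ≤ (∑ y, μ y) * ∑ y, μ y * (u x - u y)^2 := hCS
          _ ≤ M * (M * (4 ^ L * K)) := by
              rw [← hM]
              exact mul_le_mul_of_nonneg_left hsum2 hMpos.le
      have hM2 : M^2 * u x ^2 ≤ M^2 * (4 ^ L * K) := by nlinarith
      have := mul_le_mul_of_nonneg_left hM2 (le_of_lt (by positivity : (0:ℝ) < 1 / M^2))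
      calc u x ^ 2 = (1 / M^2) * (M^2 * u x ^ 2) := by field_simp
        _ ≤ (1 / M^2) * (M^2 * (4 ^ L * K)) := this
        _ = 4 ^ L * K := by field_simp
    -- conclude
    have hfinal : intV μ (fun x => u x ^ 2) ≤ M * (4 ^ L * K) := by
      rw [intV, hM, Finset.sum_mul]
      exact Finset.sum_le_sum fun x _ => mul_le_mul_of_nonneg_left (hpt x) (hμ x).le
    calc intV μ (fun x => u x ^ 2) ≤ M * (4 ^ L * K) := hfinal
      _ = 2 * M * 4 ^ L / c * (S / 2) := by
          rw [hK]; field_simp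
      _ = 2 * M * 4 ^ L / c * intV μ (gam w μ u u) := by rw [hSgam]
end
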